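/- arXiv:2210.15005 — 7 statements merged into one kernel-verified Lean document; each statement's English description precedes it below -/
import Mathlib

section
/- Fix integers 1 ≤ i < j ≤ n. For any partition of the interval [i+1, j-1] into disjoint sets K and L (i.e., K ∪ L = {i+1,...,j-1} and K ∩ L = ∅), the element (∏_{k∈K} x_k)·(∏_{l∈L} y_l)·Δ_{i,j} lies in the ideal 𝔞 = (Δ_{1,2}, Δ_{2,3}, ..., Δ_{n-1,n}). -/
open MvPolynomial

/-- `x i` in `R = k[x_1,…,x_n,y_1,…,y_n]`, the column index ranging over `Fin n`. -/
noncomputable def xv (k : Type*) [Field k] (n : ℕ) (i : Fin n) :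
    MvPolynomial (Fin n ⊕ Fin n) k := X (Sum.inl i)

/-- `y i`. -/
noncomputable def yv (k : Type*) [Field k] (n : ℕ) (i : Fin n) :
    MvPolynomial (Fin n ⊕ Fin n) k := X (Sum.inr i)

/-- The 2×2 minor `Δ_{a,b} = x_a y_b - x_b y_a`. -/
noncomputable def Δ (k : Type*) [Field k] (n : ℕ) (a b : Fin n) :
    MvPolynomial (Fin n ⊕ Fin n) k := xv k n a * yv k n b - xv k n b * yv k n a

/-- The ideal `𝔞` generated by the consecutive minors `Δ_{t,t+1}`. -/
noncomputable def consIdeal (k : Type*) [Field k] (n : ℕ) :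
    Ideal (MvPolynomial (Fin n ⊕ Fin n) k) :=
  Ideal.span {p | ∃ a b : Fin n, (b : ℕ) = (a : ℕ) + 1 ∧ p = Δ k n a b}

lemma key_lemma (k : Type*) [Field k] (n : ℕ) :
    ∀ d : ℕ, ∀ i j : Fin n, (j : ℕ) = (i : ℕ) + d + 1 →
    ∀ K L : Finset (Fin n), K ∪ L = Finset.Ioo i j → Disjoint K L →
    (∏ a ∈ K, xv k n a) * (∏ b ∈ L, yv k n b) * Δ k n i j ∈ consIdeal k n := by
  intro d
  induction d with
  | zero =>
    intro i j hj K L hKL hd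
    have hIoo : Finset.Ioo i j = ∅ := by
      apply Finset.eq_empty_of_forall_notMem
      intro a ha
      rw [Finset.mem_Ioo, Fin.lt_def, Fin.lt_def] at ha
      omega
    obtain ⟨hK, hL⟩ := Finset.union_eq_empty.mp (hKL.trans hIoo)
    rw [hK, hL]
    simp only [Finset.prod_empty, one_mul]
    exact Ideal.subset_span ⟨i, j, by omega, rfl⟩
  | succ d ih =>
    intro i j hj K L hKL hd
    have hjn : (j : ℕ) < n := j.isLt
    have hm : (i : ℕ) + 1 < n := by omega
    set m : Fin n := ⟨(i : ℕ) + 1, hm⟩ with hmdef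
    have hmval : (m : ℕ) = (i : ℕ) + 1 := rfl
    have hmI : m ∈ Finset.Ioo i j := by
      rw [Finset.mem_Ioo, Fin.lt_def, Fin.lt_def]
      omega
    have hgen : Δ k n i m ∈ consIdeal k n :=
      Ideal.subset_span ⟨i, m, rfl, rfl⟩
    have hmKL : m ∈ K ∪ L := hKL ▸ hmI
    rcases Finset.mem_union.mp hmKL with hmK | hmL
    · -- m ∈ K : use x-identity
      have hmL : m ∉ L := Finset.disjoint_left.mp hd hmK
      have hunion : K.erase m ∪ L = Finset.Ioo m j := by
        ext a
        have hmem := Finset.ext_iff.mp hKL a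
        simp only [Finset.mem_union, Finset.mem_Ioo, Fin.lt_def] at hmem ⊢
        simp only [Finset.mem_erase, Fin.ext_iff]
        constructor
        · rintro (⟨hne, haK⟩ | haL)
          · have := hmem.mp (Or.inl haK); omega
          · have := hmem.mp (Or.inr haL)
            have hne : (a : ℕ) ≠ (i : ℕ) + 1 := fun h => hmL ((Fin.ext (h.trans hmval.symm) : a = m) ▸ haL)
            omega
        · rintro ⟨h1, h2⟩
          rcases hmem.mpr ⟨by omega, h2⟩ with haK | haL
          · exact Or.inl ⟨by omega, haK⟩
          · exact Or.inr haL
      have hdis : Disjoint (K.erase m) L :=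
        Finset.disjoint_of_subset_left (Finset.erase_subset _ _) hd
      have hihm := ih m j (by omega) (K.erase m) L hunion hdis
      have hid : xv k n m * Δ k n i j
          = xv k n i * Δ k n m j + xv k n j * Δ k n i m := by
        simp only [Δ, xv, yv]; ring
      have hprod : (∏ a ∈ K, xv k n a)
          = xv k n m * ∏ a ∈ K.erase m, xv k n a :=
        (Finset.mul_prod_erase K _ hmK).symm
      have heq : (∏ a ∈ K, xv k n a) * (∏ b ∈ L, yv k n b) * Δ k n i j
          = xv k n i * ((∏ a ∈ K.erase m, xv k n a) * (∏ b ∈ L, yv k n b) * Δ k n m j)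
            + (xv k n j * (∏ a ∈ K.erase m, xv k n a) * (∏ b ∈ L, yv k n b)) * Δ k n i m := by
        rw [hprod]
        linear_combination ((∏ a ∈ K.erase m, xv k n a) * (∏ b ∈ L, yv k n b)) * hid
      rw [heq]
      exact Ideal.add_mem _ (Ideal.mul_mem_left _ _ hihm) (Ideal.mul_mem_left _ _ hgen)
    · -- m ∈ L : use y-identity
      have hmK : m ∉ K := Finset.disjoint_right.mp hd hmL
      have hunion : K ∪ L.erase m = Finset.Ioo m j := by
        ext a
        have hmem := Finset.ext_iff.mp hKL a
        simp only [Finset.mem_union, Finset.mem_Ioo, Fin.lt_def] at hmem ⊢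
        simp only [Finset.mem_erase, Fin.ext_iff]
        constructor
        · rintro (haK | ⟨hne, haL⟩)
          · have := hmem.mp (Or.inl haK)
            have hne : (a : ℕ) ≠ (i : ℕ) + 1 := fun h => hmK ((Fin.ext (h.trans hmval.symm) : a = m) ▸ haK)
            omega
          · have := hmem.mp (Or.inr haL); omega
        · rintro ⟨h1, h2⟩
          rcases hmem.mpr ⟨by omega, h2⟩ with haK | haL
          · exact Or.inl haK
          · exact Or.inr ⟨by omega, haL⟩
      have hdis : Disjoint K (L.erase m) :=
        Finset.disjoint_of_subset_right (Finset.erase_subset _ _) hd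
      have hihm := ih m j (by omega) K (L.erase m) hunion hdis
      have hid : yv k n m * Δ k n i j
          = yv k n i * Δ k n m j + yv k n j * Δ k n i m := by
        simp only [Δ, xv, yv]; ring
      have hprod : (∏ b ∈ L, yv k n b)
          = yv k n m * ∏ b ∈ L.erase m, yv k n b :=
        (Finset.mul_prod_erase L _ hmL).symm
      have heq : (∏ a ∈ K, xv k n a) * (∏ b ∈ L, yv k n b) * Δ k n i j
          = yv k n i * ((∏ a ∈ K, xv k n a) * (∏ b ∈ L.erase m, yv k n b) * Δ k n m j)
            + (yv k n j * (∏ a ∈ K, xv k n a) * (∏ b ∈ L.erase m, yv k n b)) * Δ k n i m := by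
        rw [hprod]
        linear_combination ((∏ a ∈ K, xv k n a) * (∏ b ∈ L.erase m, yv k n b)) * hid
      rw [heq]
      exact Ideal.add_mem _ (Ideal.mul_mem_left _ _ hihm) (Ideal.mul_mem_left _ _ hgen)

theorem stmt2 (k : Type*) [Field k] (n : ℕ) (hn : 2 ≤ n) (i j : Fin n) (hij : i < j)
    (K L : Finset (Fin n)) (hKL : K ∪ L = Finset.Ioo i j) (hd : Disjoint K L) :
    (∏ a ∈ K, xv k n a) * (∏ b ∈ L, yv k n b) * Δ k n i j ∈ consIdeal k n := by
  have hij' : (i : ℕ) < (j : ℕ) := hij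
  exact key_lemma k n ((j : ℕ) - (i : ℕ) - 1) i j (by omega) K L hKL hd
end

section
/- Under the ring homomorphism φ: k[x_1,...,x_n,y_1,...,y_n] → k[x_1,...,x_n] sending x_i ↦ x_i for i ≤ n-1, x_n ↦ 0, y_1 ↦ 0, and y_i ↦ x_{i-1} for i ≥ 2, the image of the ideal (Δ_{1,2},...,Δ_{n-1,n}) is the ideal (x_1², x_2²-x_1x_3, x_3²-x_2x_4, ..., x_{n-2}²-x_{n-3}x_{n-1}, x_{n-1}²), and the radical of this image is (x_1,...,x_{n-1}). -/
open MvPolynomial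

/-- The specialization `φ : k[x,y] → k[x]` substituting the matrix
`((x_1,…,x_{n-1},0),(0,x_1,…,x_{n-1}))` for the generic matrix:
`x_i ↦ x_i` for `i ≤ n-1`, `x_n ↦ 0`, `y_1 ↦ 0`, `y_i ↦ x_{i-1}` for `i ≥ 2`
(written here 0-based). -/
noncomputable def φ (k : Type*) [Field k] (n : ℕ) :
    MvPolynomial (Fin n ⊕ Fin n) k →ₐ[k] MvPolynomial (Fin n) k :=
  aeval (Sum.elim
    (fun i : Fin n => if (i : ℕ) = n - 1 then 0 else X i)
    (fun i : Fin n => if h : (i : ℕ) = 0 then 0 else X ⟨(i : ℕ) - 1, by omega⟩))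

/-- The generators `x_1², x_2²-x_1x_3, …, x_{n-2}²-x_{n-3}x_{n-1}, x_{n-1}²`
(0-based: indexed by `t : Fin (n-1)`, corresponding to `x_{t+1}`). -/
noncomputable def bGen (k : Type*) [Field k] (n : ℕ) (hn : 3 ≤ n) (t : Fin (n - 1)) :
    MvPolynomial (Fin n) k :=
  if t.1 = 0 then X (⟨0, by omega⟩ : Fin n) ^ 2
  else if t.1 = n - 2 then X (⟨n - 2, by omega⟩ : Fin n) ^ 2
  else X (⟨t.1, by have := t.isLt; omega⟩ : Fin n) ^ 2 -
    X (⟨t.1 - 1, by have := t.isLt; omega⟩ : Fin n) *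
    X (⟨t.1 + 1, by have := t.isLt; omega⟩ : Fin n)

section Aux

open MvPolynomial

lemma phi_delta (k : Type*) [Field k] (n : ℕ) (hn : 3 ≤ n) (a b : Fin n)
    (hb : (b : ℕ) = (a : ℕ) + 1) :
    φ k n (Δ k n a b) = bGen k n hn ⟨a.1, by have := b.isLt; omega⟩ := by
  obtain ⟨a, ha⟩ := a
  obtain ⟨b, hblt⟩ := b
  simp only [Fin.val_mk] at hb
  subst hb
  have han : a ≠ n - 1 := by omega
  have hb0 : a + 1 ≠ 0 := by omega
  simp only [φ, Δ, xv, yv, map_sub, map_mul, aeval_X, Sum.elim_inl, Sum.elim_inr,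
    if_neg han, dif_neg hb0, bGen, Fin.val_mk]
  have e1 : (⟨a + 1 - 1, by omega⟩ : Fin n) = ⟨a, by omega⟩ :=
    Fin.ext (show a + 1 - 1 = a by omega)
  rw [e1]
  rcases eq_or_ne a 0 with h0 | h0
  · have hbn1 : a + 1 ≠ n - 1 := by omega
    subst h0
    simp [hbn1, sq]
  · rcases eq_or_ne a (n - 2) with h2 | h2
    · have hbn1 : a + 1 = n - 1 := by omega
      subst h2
      simp [hbn1, h0, sq]
    · have hbn1 : a + 1 ≠ n - 1 := by omega
      simp only [if_neg hbn1, dif_neg h0, if_neg h0, if_neg h2, sq]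
      ring

/-- Part 1: the image ideal. -/
lemma map_eq (k : Type*) [Field k] (n : ℕ) (hn : 3 ≤ n) :
    Ideal.map (φ k n).toRingHom (consIdeal k n) =
      Ideal.span (Set.range (bGen k n hn)) := by
  rw [consIdeal, Ideal.map_span]
  congr 1
  ext z
  constructor
  · rintro ⟨p, ⟨a, b, hb, rfl⟩, rfl⟩
    exact ⟨⟨a.1, by have := b.isLt; omega⟩, (phi_delta k n hn a b hb).symm⟩
  · rintro ⟨t, rfl⟩
    have ht := t.isLt
    refine ⟨Δ k n ⟨t.1, by omega⟩ ⟨t.1 + 1, by omega⟩,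
      ⟨⟨t.1, by omega⟩, ⟨t.1 + 1, by omega⟩, rfl, rfl⟩, ?_⟩
    rw [show ((φ k n).toRingHom : MvPolynomial (Fin n ⊕ Fin n) k → MvPolynomial (Fin n) k)
        = φ k n from rfl]
    exact phi_delta k n hn ⟨t.1, by omega⟩ ⟨t.1 + 1, by omega⟩ rfl

/-- the substitution killing the variables `X_i`, `i < n-1`. -/
noncomputable def ψ (k : Type*) [Field k] (n : ℕ) :
    MvPolynomial (Fin n) k →ₐ[k] MvPolynomial (Fin n) k :=
  aeval (fun i : Fin n => if (i : ℕ) < n - 1 then 0 else X i)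

lemma span_eq_ker (k : Type*) [Field k] (n : ℕ) :
    Ideal.span ((fun i : Fin n => (X i : MvPolynomial (Fin n) k)) ''
        {i : Fin n | (i : ℕ) < n - 1}) = RingHom.ker (ψ k n).toRingHom := by
  apply le_antisymm
  · rw [Ideal.span_le]
    rintro _ ⟨i, hi, rfl⟩
    simp only [SetLike.mem_coe, RingHom.mem_ker, AlgHom.toRingHom_eq_coe,
      RingHom.coe_coe, ψ, aeval_X]
    exact if_pos (show (i : ℕ) < n - 1 from hi)
  · intro p hp
    rw [show ((fun i : Fin n => (X i : MvPolynomial (Fin n) k)) ''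
        {i : Fin n | (i : ℕ) < n - 1}) = X '' {i : Fin n | (i : ℕ) < n - 1} from rfl,
      mem_ideal_span_X_image]
    intro m hm
    by_contra hc
    push_neg at hc
    simp only [Set.mem_setOf_eq] at hc
    have hker : ψ k n p = 0 := hp
    have hcoeff : coeff m (ψ k n p) = coeff m p := by
      rw [ψ, aeval_def, algebraMap_eq, eval₂_eq, coeff_sum]
      rw [Finset.sum_eq_single_of_mem m hm]
      · have : ∀ i ∈ m.support, (if (i : ℕ) < n - 1 then (0 : MvPolynomial (Fin n) k)
            else X i) = X i := by
          intro i hi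
          rw [if_neg]
          intro hlt
          exact Finsupp.mem_support_iff.mp hi (hc i hlt)
        rw [Finset.prod_congr rfl fun i hi => by rw [this i hi]]
        rw [show (C (coeff m p) * ∏ i ∈ m.support, (X i : MvPolynomial (Fin n) k) ^ m i)
            = monomial m (coeff m p) from (monomial_eq).symm, coeff_monomial, if_pos rfl]
      · intro d _ hdm
        by_cases hd : ∃ i ∈ d.support, (i : ℕ) < n - 1
        · obtain ⟨i, hi, hilt⟩ := hd
          rw [Finset.prod_eq_zero hi, mul_zero, coeff_zero]
          rw [if_pos hilt, zero_pow (Finsupp.mem_support_iff.mp hi)]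
        · push_neg at hd
          have : ∀ i ∈ d.support, (if (i : ℕ) < n - 1 then (0 : MvPolynomial (Fin n) k)
              else X i) = X i := fun i hi => if_neg (Nat.not_lt.mpr (hd i hi))
          rw [Finset.prod_congr rfl fun i hi => by rw [this i hi]]
          rw [show (C (coeff d p) * ∏ i ∈ d.support, (X i : MvPolynomial (Fin n) k) ^ d i)
              = monomial d (coeff d p) from (monomial_eq).symm, coeff_monomial, if_neg hdm]
    rw [hker, coeff_zero] at hcoeff
    exact Finsupp.mem_support_iff.mp (by exact hm) hcoeff.symm

lemma span_isPrime (k : Type*) [Field k] (n : ℕ) :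
    (Ideal.span ((fun i : Fin n => (X i : MvPolynomial (Fin n) k)) ''
        {i : Fin n | (i : ℕ) < n - 1})).IsPrime := by
  rw [span_eq_ker]
  exact RingHom.ker_isPrime _

end Aux

open MvPolynomial in
theorem stmt4 (k : Type*) [Field k] (n : ℕ) (hn : 3 ≤ n) :
    Ideal.map (φ k n).toRingHom (consIdeal k n) =
      Ideal.span (Set.range (bGen k n hn)) ∧
    (Ideal.map (φ k n).toRingHom (consIdeal k n)).radical =
      Ideal.span ((fun i : Fin n => (X i : MvPolynomial (Fin n) k)) ''
        {i : Fin n | (i : ℕ) < n - 1}) := by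
  refine ⟨map_eq k n hn, ?_⟩
  rw [map_eq k n hn]
  set I := Ideal.span (Set.range (bGen k n hn)) with hI
  set J := Ideal.span ((fun i : Fin n => (X i : MvPolynomial (Fin n) k)) ''
      {i : Fin n | (i : ℕ) < n - 1}) with hJ
  have hIJ : I ≤ J := by
    rw [hI, Ideal.span_le]
    rintro _ ⟨t, rfl⟩
    have ht := t.isLt
    have hX : ∀ j : ℕ, ∀ h : j < n - 1, (X (⟨j, by omega⟩ : Fin n) : MvPolynomial (Fin n) k) ∈ J :=
      fun j h => Ideal.subset_span ⟨⟨j, by omega⟩, h, rfl⟩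
    rw [bGen]
    split_ifs with h0 h2
    · exact SetLike.mem_coe.mpr (Ideal.pow_mem_of_mem J (hX 0 (by omega)) 2 (by omega))
    · exact SetLike.mem_coe.mpr (Ideal.pow_mem_of_mem J (hX (n - 2) (by omega)) 2 (by omega))
    · exact SetLike.mem_coe.mpr (sub_mem
        (Ideal.pow_mem_of_mem J (hX t.1 (by omega)) 2 (by omega))
        (Ideal.mul_mem_right _ J (hX (t.1 - 1) (by omega))))
  apply le_antisymm
  · calc I.radical ≤ J.radical := Ideal.radical_mono hIJ
      _ = J := (span_isPrime k n).radical
  · have key : ∀ j : ℕ, ∀ hj : j < n - 1,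
        (X (⟨j, by omega⟩ : Fin n) : MvPolynomial (Fin n) k) ∈ I.radical := by
      intro j
      induction j using Nat.strong_induction_on with
      | _ j ih =>
        intro hj
        have hbg : bGen k n hn ⟨j, hj⟩ ∈ I := Ideal.subset_span ⟨⟨j, hj⟩, rfl⟩
        rcases eq_or_ne j 0 with rfl | h0
        · refine Ideal.mem_radical_of_pow_mem (m := 2) (Ideal.le_radical ?_)
          rw [bGen, if_pos rfl] at hbg
          exact hbg
        · rcases eq_or_ne j (n - 2) with rfl | h2
          · refine Ideal.mem_radical_of_pow_mem (m := 2) (Ideal.le_radical ?_)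
            rw [bGen, if_neg h0, if_pos rfl] at hbg
            exact hbg
          · refine Ideal.mem_radical_of_pow_mem (m := 2) ?_
            have h1 : (X (⟨j - 1, by omega⟩ : Fin n) : MvPolynomial (Fin n) k) ∈ I.radical :=
              ih (j - 1) (by omega) (by omega)
            have : (X (⟨j, by omega⟩ : Fin n) : MvPolynomial (Fin n) k) ^ 2 =
                bGen k n hn ⟨j, hj⟩ + X (⟨j - 1, by omega⟩ : Fin n) *
                  X (⟨j + 1, by omega⟩ : Fin n) := by
              rw [bGen, if_neg h0, if_neg h2]; ring
            rw [this]
            exact add_mem (Ideal.le_radical hbg) (Ideal.mul_mem_right _ _ h1)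
    rw [hJ, Ideal.span_le]
    rintro _ ⟨i, hi, rfl⟩
    exact key i.1 hi
end

section
/- The ideal (x_1², x_2² - x_1x_3, x_3² - x_2x_4, ..., x_{n-2}² - x_{n-3}x_{n-1}, x_{n-1}²) in k[x_1,...,x_n] has radical equal to (x_1,...,x_{n-1}), and hence has height n-1. -/
open MvPolynomial

/-- The height of an ideal: the infimum of the heights (in the prime spectrum)
of the primes containing it. -/
noncomputable def idealHeight {R : Type*} [CommRing R] (I : Ideal R) : ℕ∞ :=
  ⨅ p ∈ {p : PrimeSpectrum R | I ≤ p.asIdeal}, Order.height p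

/-!
Every generator lies in the prime `P = (x_1, …, x_{n-1})`. Conversely `x_1² = g_1`, and for
`1 < t < n-1` we have `x_t² = g_t + x_{t-1} x_{t+1}`, so by induction every `x_t` with
`t < n` lies in the radical (the last generator `x_{n-1}²` is handled like the first).
Hence the radical is `P`, and the height of the ideal is that of `P`. Finally `P` is the
`(n-1)`-st member of the chain `0 ⊂ (x_1) ⊂ (x_1, x_2) ⊂ ⋯ ⊂ (x_1, …, x_n)` of primes. Its
length `n` is the Krull dimension of `k[x_1, …, x_n]`, so the height of each member is its index.
-/

namespace MvPolynomial

variable {σ R : Type*} [CommRing R]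

theorem X_mem_ideal_span_X_image_iff [Nontrivial R] {s : Set σ} {i : σ} :
    X i ∈ Ideal.span (X '' s : Set (MvPolynomial σ R)) ↔ i ∈ s := by
  simp [mem_ideal_span_X_image, support_X, Finsupp.single_apply_ne_zero]

theorem strictMono_ideal_span_X_image [Nontrivial R] :
    StrictMono fun s : Set σ => Ideal.span (X '' s : Set (MvPolynomial σ R)) := by
  intro s t hst
  obtain ⟨i, hit, his⟩ := Set.exists_of_ssubset hst
  refine SetLike.lt_iff_le_and_exists.mpr
    ⟨Ideal.span_mono (Set.image_mono hst.subset), X i, ?_, ?_⟩ <;>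
    simpa [X_mem_ideal_span_X_image_iff]

open Classical in
noncomputable def killVars (s : Set σ) : MvPolynomial σ R →ₐ[R] MvPolynomial σ R :=
  aeval fun i => if i ∈ s then 0 else X i

theorem sub_killVars_mem_ideal_span_X_image (s : Set σ) (p : MvPolynomial σ R) :
    p - killVars s p ∈ Ideal.span (X '' s : Set (MvPolynomial σ R)) := by
  classical
  induction p using MvPolynomial.induction_on with
  | C a => simp [killVars]
  | add p q hp hq => simpa [add_sub_add_comm] using Ideal.add_mem _ hp hq
  | mul_X p i hp =>
    by_cases hi : i ∈ s
    · simpa [killVars, hi] using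
        Ideal.mul_mem_left _ p (Ideal.subset_span (Set.mem_image_of_mem X hi))
    · simpa [killVars, hi, sub_mul] using Ideal.mul_mem_right (X i) _ hp

theorem ker_killVars (s : Set σ) :
    RingHom.ker (killVars (R := R) s) = Ideal.span (X '' s) := by
  classical
  refine le_antisymm (fun p hp => ?_) (Ideal.span_le.mpr ?_)
  · simpa [(RingHom.mem_ker).mp hp] using sub_killVars_mem_ideal_span_X_image s p
  · refine Set.image_subset_iff.mpr fun i hi => ?_
    simp [killVars, hi]

theorem isPrime_ideal_span_X_image [IsDomain R] (s : Set σ) :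
    (Ideal.span (X '' s : Set (MvPolynomial σ R))).IsPrime :=
  ker_killVars (R := R) s ▸ RingHom.ker_isPrime _

end MvPolynomial

theorem idealHeight_eq_height_of_radical_eq {R : Type*} [CommRing R] {I : Ideal R}
    {P : PrimeSpectrum R} (h : I.radical = P.asIdeal) : idealHeight I = Order.height P := by
  refine le_antisymm (iInf₂_le P (show I ≤ P.asIdeal from h ▸ Ideal.le_radical))
    (le_iInf₂ fun p (hp : I ≤ p.asIdeal) => Order.height_mono ?_)
  exact (PrimeSpectrum.asIdeal_le_asIdeal _ _).mp (h ▸ (p.isPrime.radical_le_iff).mpr hp)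

noncomputable def varChain (R : Type*) [CommRing R] [IsDomain R] (n : ℕ) (i : Fin (n + 1)) :
    PrimeSpectrum (MvPolynomial (Fin n) R) :=
  ⟨Ideal.span (X '' {j : Fin n | (j : ℕ) < i}), isPrime_ideal_span_X_image _⟩

theorem strictMono_varChain (R : Type*) [CommRing R] [IsDomain R] (n : ℕ) :
    StrictMono (varChain R n) := by
  intro a b hab
  have hb := b.isLt
  refine (PrimeSpectrum.asIdeal_lt_asIdeal _ _).mp (strictMono_ideal_span_X_image ?_)
  refine (Set.ssubset_iff_of_subset fun (j : Fin n) (hj : (j : ℕ) < a) => ?_).mpr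
    ⟨⟨a, by omega⟩, show (a : ℕ) < b from hab, fun h : (a : ℕ) < a => h.false⟩
  exact show (j : ℕ) < b by omega

theorem height_varChain (k : Type*) [Field k] (n : ℕ) (i : Fin (n + 1)) :
    Order.height (varChain k n i) = (i : ℕ) := by
  let chain : LTSeries (PrimeSpectrum (MvPolynomial (Fin n) k)) :=
    LTSeries.mk n (varChain k n) (strictMono_varChain k n)
  refine Order.height_eq_index_of_length_eq_height_last (p := chain)
    (le_antisymm Order.length_le_height_last ?_) i
  have := Order.height_le_krullDim chain.last
  rw [← ringKrullDim, MvPolynomial.ringKrullDim_of_isNoetherianRing,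
    ringKrullDim_eq_zero_of_field] at this
  simp only [zero_add, Nat.card_eq_fintype_card, Fintype.card_fin] at this
  exact_mod_cast this

section bGen

variable {k : Type*} [Field k] {n : ℕ} (hn : 3 ≤ n)

theorem bGen_eq_X_sq {t : Fin (n - 1)} (ht : (t : ℕ) = 0 ∨ (t : ℕ) = n - 2) :
    bGen k n hn t = X ⟨t, by omega⟩ ^ 2 := by
  rcases ht with ht | ht <;> simp only [bGen, ht, if_true]
  simp only [show n - 2 ≠ 0 by omega, if_false]

theorem bGen_eq_X_sq_sub {t : Fin (n - 1)} (h0 : (t : ℕ) ≠ 0) (h2 : (t : ℕ) ≠ n - 2) :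
    bGen k n hn t = X ⟨t, by omega⟩ ^ 2 - X ⟨t - 1, by omega⟩ * X ⟨t + 1, by omega⟩ := by
  simp [bGen, h0, h2]

theorem span_range_bGen_le :
    Ideal.span (Set.range (bGen k n hn)) ≤ Ideal.span (X '' {i : Fin n | (i : ℕ) < n - 1}) := by
  refine Ideal.span_le.mpr (Set.range_subset_iff.mpr fun t => ?_)
  have hX (i : Fin n) (hi : (i : ℕ) < n - 1) :
      (X i : MvPolynomial (Fin n) k) ∈ Ideal.span (X '' {i : Fin n | (i : ℕ) < n - 1}) :=
    Ideal.subset_span (Set.mem_image_of_mem X hi)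
  by_cases ht : (t : ℕ) = 0 ∨ (t : ℕ) = n - 2
  · rw [bGen_eq_X_sq hn ht]
    exact Ideal.pow_mem_of_mem _ (hX _ t.isLt) 2 two_pos
  · rw [not_or] at ht
    rw [bGen_eq_X_sq_sub hn ht.1 ht.2]
    exact Ideal.sub_mem _ (Ideal.pow_mem_of_mem _ (hX _ t.isLt) 2 two_pos)
      (Ideal.mul_mem_right _ _ (hX _ (by dsimp only; omega)))

theorem X_mem_radical_span_range_bGen (t : ℕ) (ht : t < n - 1) :
    X ⟨t, by omega⟩ ∈ (Ideal.span (Set.range (bGen k n hn))).radical := by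
  induction t using Nat.strong_induction_on with
  | _ t ih =>
    refine Ideal.mem_radical_of_pow_mem (m := 2) ?_
    have hgen := Ideal.le_radical
      (Ideal.subset_span (Set.mem_range_self (f := bGen k n hn) ⟨t, ht⟩))
    by_cases hend : t = 0 ∨ t = n - 2
    · rwa [bGen_eq_X_sq hn hend] at hgen
    · rw [not_or] at hend
      rw [bGen_eq_X_sq_sub hn hend.1 hend.2] at hgen
      simpa using Ideal.add_mem _ hgen
        (Ideal.mul_mem_right (X ⟨t + 1, by omega⟩) _ (ih (t - 1) (by omega) (by omega)))

theorem radical_span_range_bGen :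
    (Ideal.span (Set.range (bGen k n hn))).radical =
      Ideal.span (X '' {i : Fin n | (i : ℕ) < n - 1}) := by
  refine le_antisymm ?_ (Ideal.span_le.mpr (Set.image_subset_iff.mpr fun i hi => ?_))
  · exact ((isPrime_ideal_span_X_image _).radical_le_iff).mpr (span_range_bGen_le hn)
  · exact X_mem_radical_span_range_bGen hn i hi

end bGen

theorem stmt5 (k : Type*) [Field k] (n : ℕ) (hn : 3 ≤ n) :
    (Ideal.span (Set.range (bGen k n hn))).radical =
      Ideal.span ((fun i : Fin n => (X i : MvPolynomial (Fin n) k)) ''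
        {i : Fin n | (i : ℕ) < n - 1}) ∧
    idealHeight (Ideal.span (Set.range (bGen k n hn))) = (n - 1 : ℕ) := by
  refine ⟨radical_span_range_bGen hn, ?_⟩
  rw [idealHeight_eq_height_of_radical_eq (P := varChain k n ⟨n - 1, by omega⟩)
    (radical_span_range_bGen hn), height_varChain]
end

section
/- Let f and g be distinct binomials (each a difference of two nonzero terms, not monomials) in a polynomial ring with a fixed monomial order, and let c = gcd(in(f), in(g)) (with coefficient 1). If c divides in(f) - f and c divides in(g) - g, then the S-polynomial S(f,g) reduces to 0 with respect to {f, g}. -/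
/-!
Let `c = gcd(in f, in g)`. Since `c` divides all four exponents, `x^{v-c} x^u = x^{u-c} x^v` for
every exponent `u` of `f` and `v` of `g`. With `h₁ = d₂x^{b₂}/c` and `h₂ = -c₂x^{a₂}/c` these
identities cancel terms to give both `S(f,g) = h₁f + h₂g` and `S(f,g) = h₁ in(f) + h₂ in(g)`.
So unless `S(f,g) = 0` (where `h₁ = h₂ = 0` works), the initial terms of `h₁f` and `h₂g` are
monomials of `S(f,g)`.
-/

open MvPolynomial

namespace MvPolynomial

variable {σ R : Type*}

section CommSemiring

variable [CommSemiring R]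

theorem monomial_tsub_mul_monomial_comm {c u v : σ →₀ ℕ} (hu : c ≤ u) (hv : c ≤ v) (r s : R) :
    monomial (v - c) s * monomial u r = monomial (u - c) r * monomial v s := by
  rw [monomial_mul, monomial_mul, tsub_add_eq_add_tsub hv, tsub_add_eq_add_tsub hu, add_comm v,
    mul_comm s]

theorem mem_support_monomial_add_monomial {u v : σ →₀ ℕ} {r s : R} (hr : r ≠ 0)
    (h : monomial u r + monomial v s ≠ 0) : u ∈ (monomial u r + monomial v s).support := by
  classical
  rw [mem_support_iff, coeff_add, coeff_monomial, coeff_monomial, if_pos rfl]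
  split_ifs with hvu
  · subst hvu
    rwa [← map_add, Ne, monomial_eq_zero] at h
  · rwa [add_zero]

end CommSemiring

variable [CommRing R]

theorem _root_.MonomialOrder.toSyn_le_of_mem_support_monomial_mul_binomial
    (m : MonomialOrder σ) {u a₁ a₂ e : σ →₀ ℕ} {γ c₁ c₂ : R} (ha : m.toSyn a₂ ≤ m.toSyn a₁)
    (he : e ∈ (monomial u γ * (monomial a₁ c₁ - monomial a₂ c₂)).support) :
    m.toSyn e ≤ m.toSyn (u + a₁) := by
  classical
  rw [mul_sub, monomial_mul, monomial_mul] at he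
  rcases Finset.mem_union.1 (support_sub σ _ _ he) with he | he <;>
    rw [Finset.mem_singleton.1 (support_monomial_subset he)]
  simpa only [map_add] using add_le_add_right ha (m.toSyn u)

variable {a₁ a₂ b₁ b₂ c : σ →₀ ℕ} {c₁ c₂ d₁ d₂ : R}

theorem binomial_sPolynomial_eq_add (ha₁ : c ≤ a₁) (ha₂ : c ≤ a₂) (hb₁ : c ≤ b₁) (hb₂ : c ≤ b₂) :
    monomial (b₁ - c) d₁ * (monomial a₁ c₁ - monomial a₂ c₂)
        - monomial (a₁ - c) c₁ * (monomial b₁ d₁ - monomial b₂ d₂)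
      = monomial (b₂ - c) d₂ * (monomial a₁ c₁ - monomial a₂ c₂)
        + monomial (a₂ - c) (-c₂) * (monomial b₁ d₁ - monomial b₂ d₂) := by
  rw [map_neg]
  linear_combination monomial_tsub_mul_monomial_comm ha₁ hb₁ c₁ d₁
    - monomial_tsub_mul_monomial_comm ha₁ hb₂ c₁ d₂
    - monomial_tsub_mul_monomial_comm ha₂ hb₁ c₂ d₁
    + monomial_tsub_mul_monomial_comm ha₂ hb₂ c₂ d₂

theorem binomial_sPolynomial_eq_monomial_add_monomial (ha₁ : c ≤ a₁) (ha₂ : c ≤ a₂)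
    (hb₁ : c ≤ b₁) (hb₂ : c ≤ b₂) :
    monomial (b₁ - c) d₁ * (monomial a₁ c₁ - monomial a₂ c₂)
        - monomial (a₁ - c) c₁ * (monomial b₁ d₁ - monomial b₂ d₂)
      = monomial (b₂ - c + a₁) (d₂ * c₁) + monomial (a₂ - c + b₁) (-c₂ * d₁) := by
  rw [← monomial_mul, ← monomial_mul, map_neg]
  linear_combination monomial_tsub_mul_monomial_comm ha₁ hb₁ c₁ d₁
    - monomial_tsub_mul_monomial_comm ha₁ hb₂ c₁ d₂
    - monomial_tsub_mul_monomial_comm ha₂ hb₁ c₂ d₁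

end MvPolynomial

theorem stmt6_general {k σ : Type*} [Field k] (m : MonomialOrder σ)
    (a₁ a₂ b₁ b₂ : σ →₀ ℕ) (c₁ c₂ d₁ d₂ : k)
    (hc₁ : c₁ ≠ 0) (hc₂ : c₂ ≠ 0) (hd₁ : d₁ ≠ 0) (hd₂ : d₂ ≠ 0)
    (ha : m.toSyn a₂ < m.toSyn a₁) (hb : m.toSyn b₂ < m.toSyn b₁)
    (f g : MvPolynomial σ k)
    (hf : f = monomial a₁ c₁ - monomial a₂ c₂)
    (hg : g = monomial b₁ d₁ - monomial b₂ d₂)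
    (hdivf : a₁ ⊓ b₁ ≤ a₂) (hdivg : a₁ ⊓ b₁ ≤ b₂) :
    ∃ h₁ h₂ : MvPolynomial σ k,
      monomial (b₁ - a₁ ⊓ b₁) d₁ * f - monomial (a₁ - a₁ ⊓ b₁) c₁ * g = h₁ * f + h₂ * g ∧
      (∀ e ∈ (h₁ * f).support,
        ∃ d ∈ (monomial (b₁ - a₁ ⊓ b₁) d₁ * f - monomial (a₁ - a₁ ⊓ b₁) c₁ * g).support,
          m.toSyn e ≤ m.toSyn d) ∧
      (∀ e ∈ (h₂ * g).support,
        ∃ d ∈ (monomial (b₁ - a₁ ⊓ b₁) d₁ * f - monomial (a₁ - a₁ ⊓ b₁) c₁ * g).support,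
          m.toSyn e ≤ m.toSyn d) := by
  subst hf hg
  have hca : a₁ ⊓ b₁ ≤ a₁ := inf_le_left
  have hcb : a₁ ⊓ b₁ ≤ b₁ := inf_le_right
  by_cases hS : monomial (b₁ - a₁ ⊓ b₁) d₁ * (monomial a₁ c₁ - monomial a₂ c₂)
      - monomial (a₁ - a₁ ⊓ b₁) c₁ * (monomial b₁ d₁ - monomial b₂ d₂) = 0
  · exact ⟨0, 0, by simp [hS], by simp, by simp⟩
  rw [binomial_sPolynomial_eq_monomial_add_monomial hca hdivf hcb hdivg] at hS
  refine ⟨monomial (b₂ - a₁ ⊓ b₁) d₂, monomial (a₂ - a₁ ⊓ b₁) (-c₂),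
    binomial_sPolynomial_eq_add hca hdivf hcb hdivg,
    fun e he => ⟨_, ?_, m.toSyn_le_of_mem_support_monomial_mul_binomial ha.le he⟩,
    fun e he => ⟨_, ?_, m.toSyn_le_of_mem_support_monomial_mul_binomial hb.le he⟩⟩
  all_goals rw [binomial_sPolynomial_eq_monomial_add_monomial hca hdivf hcb hdivg]
  · exact mem_support_monomial_add_monomial (mul_ne_zero hd₂ hc₁) hS
  · rw [add_comm] at hS ⊢
    exact mem_support_monomial_add_monomial (mul_ne_zero (neg_ne_zero.2 hc₂) hd₁) hS

/-- Let `f = c₁x^{a₁} - c₂x^{a₂}` and `g = d₁x^{b₁} - d₂x^{b₂}` be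
distinct binomials (neither a monomial, with leading exponents `a₁`, `b₁` for a fixed
monomial order `m`).  The gcd (with coefficient 1) of the initial terms is `x^{a₁ ⊓ b₁}`.
If it divides the tails `in(f) - f = c₂x^{a₂}` and `in(g) - g = d₂x^{b₂}`,
then the S-polynomial
`S(f,g) = (in(g)/gcd)·f - (in(f)/gcd)·g = d₁x^{b₁ - a₁⊓b₁}·f - c₁x^{a₁ - a₁⊓b₁}·g`
reduces to 0 with respect to `{f, g}`: it has a standard representation
`S(f,g) = h₁f + h₂g` with `in(hᵢfᵢ) ≼ in(S(f,g))`. -/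
theorem stmt6 {k σ : Type*} [Field k] (m : MonomialOrder σ)
    (a₁ a₂ b₁ b₂ : σ →₀ ℕ) (c₁ c₂ d₁ d₂ : k)
    (hc₁ : c₁ ≠ 0) (hc₂ : c₂ ≠ 0) (hd₁ : d₁ ≠ 0) (hd₂ : d₂ ≠ 0)
    (ha : m.toSyn a₂ < m.toSyn a₁) (hb : m.toSyn b₂ < m.toSyn b₁)
    (f g : MvPolynomial σ k)
    (hf : f = monomial a₁ c₁ - monomial a₂ c₂)
    (hg : g = monomial b₁ d₁ - monomial b₂ d₂)
    (hfg : f ≠ g)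
    (hdivf : a₁ ⊓ b₁ ≤ a₂) (hdivg : a₁ ⊓ b₁ ≤ b₂) :
    ∃ h₁ h₂ : MvPolynomial σ k,
      monomial (b₁ - a₁ ⊓ b₁) d₁ * f - monomial (a₁ - a₁ ⊓ b₁) c₁ * g = h₁ * f + h₂ * g ∧
      (∀ e ∈ (h₁ * f).support,
        ∃ d ∈ (monomial (b₁ - a₁ ⊓ b₁) d₁ * f - monomial (a₁ - a₁ ⊓ b₁) c₁ * g).support,
          m.toSyn e ≤ m.toSyn d) ∧
      (∀ e ∈ (h₂ * g).support,
        ∃ d ∈ (monomial (b₁ - a₁ ⊓ b₁) d₁ * f - monomial (a₁ - a₁ ⊓ b₁) c₁ * g).support,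
          m.toSyn e ≤ m.toSyn d) :=
  stmt6_general m a₁ a₂ b₁ b₂ c₁ c₂ d₁ d₂ hc₁ hc₂ hd₁ hd₂ ha hb f g hf hg hdivf hdivg
end

section
/- Let 𝔞 = (Δ_{1,2},...,Δ_{n-1,n}) ⊆ I where I is the ideal of 2×2 minors of the generic 2×n matrix, n ≥ 4. Then the squarefree monomial X_K Y_L = (∏_{k∈K} x_k)(∏_{l∈L} y_l) lies in 𝔞 : I whenever K ∪ L = {2,...,n-1} and K ∩ L = ∅. -/
open MvPolynomial

/-- The ideal of all 2×2 minors of the generic `2 × n` matrix. -/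
noncomputable def minorsIdeal (k : Type*) [Field k] (n : ℕ) :
    Ideal (MvPolynomial (Fin n ⊕ Fin n) k) :=
  Ideal.span {p | ∃ a b : Fin n, a < b ∧ p = Δ k n a b}

/-- The index interval `{2, …, n-1}` (1-based), i.e. `{1, …, n-2}` in `Fin n` (0-based). -/
def midInterval (n : ℕ) : Finset (Fin n) :=
  Finset.univ.filter fun a : Fin n => 1 ≤ (a : ℕ) ∧ (a : ℕ) ≤ n - 2

lemma key (k : Type*) [Field k] (n : ℕ) :
    ∀ d : ℕ, ∀ a b : Fin n, (b : ℕ) = (a : ℕ) + d + 1 →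
    ∀ (c : MvPolynomial (Fin n ⊕ Fin n) k) (K L : Finset (Fin n)),
      (∀ t : Fin n, (a : ℕ) < (t : ℕ) → (t : ℕ) < (b : ℕ) → t ∈ K ∨ t ∈ L) →
      c * ((∏ i ∈ K, xv k n i) * ∏ i ∈ L, yv k n i) * Δ k n a b ∈ consIdeal k n := by
  intro d
  induction d with
  | zero =>
    intro a b hab c K L _
    exact Ideal.mul_mem_left _ _ (Ideal.subset_span ⟨a, b, hab, rfl⟩)
  | succ d ih =>
    intro a b hab c K L hcov
    have htn : (a : ℕ) + 1 < n := by have := b.isLt; omega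
    set t : Fin n := ⟨(a : ℕ) + 1, htn⟩ with htdef
    have ht1 : (a : ℕ) < (t : ℕ) := by simp [htdef]
    have ht2 : (t : ℕ) < (b : ℕ) := by simp [htdef]; omega
    have hbt : (b : ℕ) = (t : ℕ) + d + 1 := by simp [htdef]; omega
    have htab : (t : ℕ) = (a : ℕ) + 1 := rfl
    rcases hcov t ht1 ht2 with htK | htL
    · rw [← Finset.mul_prod_erase K _ htK]
      have heq :
          c * ((xv k n t * ∏ i ∈ K.erase t, xv k n i) * ∏ i ∈ L, yv k n i) * Δ k n a b
            = xv k n b *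
                (c * ((∏ i ∈ K.erase t, xv k n i) * ∏ i ∈ L, yv k n i) * Δ k n a t)
              + (c * xv k n a) *
                  ((∏ i ∈ K.erase t, xv k n i) * ∏ i ∈ L, yv k n i) * Δ k n t b := by
        simp only [Δ, xv, yv]; ring
      rw [heq]
      refine Ideal.add_mem _ ?_ ?_
      · exact Ideal.mul_mem_left _ _
          (Ideal.mul_mem_left _ _ (Ideal.subset_span ⟨a, t, htab, rfl⟩))
      · refine ih t b hbt (c * xv k n a) (K.erase t) L ?_
        intro s hs1 hs2
        rcases hcov s (by omega) hs2 with h | h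
        · exact Or.inl (Finset.mem_erase.mpr ⟨by
            intro hst; rw [hst] at hs1; omega, h⟩)
        · exact Or.inr h
    · rw [← Finset.mul_prod_erase L _ htL]
      have heq :
          c * ((∏ i ∈ K, xv k n i) * (yv k n t * ∏ i ∈ L.erase t, yv k n i)) * Δ k n a b
            = yv k n b *
                (c * ((∏ i ∈ K, xv k n i) * ∏ i ∈ L.erase t, yv k n i) * Δ k n a t)
              + (c * yv k n a) *
                  ((∏ i ∈ K, xv k n i) * ∏ i ∈ L.erase t, yv k n i) * Δ k n t b := by
        simp only [Δ, xv, yv]; ring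
      rw [heq]
      refine Ideal.add_mem _ ?_ ?_
      · exact Ideal.mul_mem_left _ _
          (Ideal.mul_mem_left _ _ (Ideal.subset_span ⟨a, t, htab, rfl⟩))
      · refine ih t b hbt (c * yv k n a) K (L.erase t) ?_
        intro s hs1 hs2
        rcases hcov s (by omega) hs2 with h | h
        · exact Or.inl h
        · exact Or.inr (Finset.mem_erase.mpr ⟨by
            intro hst; rw [hst] at hs1; omega, h⟩)

/-- If `K ∪ L = {2,…,n-1}` and `K ∩ L = ∅`, then the squarefree
monomial `X_K Y_L` lies in the link `𝔞 : I`. -/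
theorem stmt8 (k : Type*) [Field k] (n : ℕ) (hn : 4 ≤ n)
    (K L : Finset (Fin n)) (hKL : K ∪ L = midInterval n) (hd : Disjoint K L) :
    (∏ a ∈ K, xv k n a) * (∏ b ∈ L, yv k n b) ∈
      (consIdeal k n).colon (minorsIdeal k n) := by
  rw [Submodule.mem_colon]
  intro p hp
  induction hp using Submodule.span_induction with
  | mem p hp =>
    obtain ⟨a, b, hab, rfl⟩ := hp
    have hab' : (a : ℕ) < (b : ℕ) := hab
    have h := key k n ((b : ℕ) - (a : ℕ) - 1) a b (by omega) 1 K L ?_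
    · simpa [smul_eq_mul] using h
    · intro t ht1 ht2
      have : t ∈ midInterval n := by
        simp only [midInterval, Finset.mem_filter, Finset.mem_univ, true_and]
        have := b.isLt
        omega
      rw [← hKL] at this
      exact Finset.mem_union.mp this
  | zero => simp
  | add p q _ _ hp hq => rw [smul_add]; exact Ideal.add_mem _ hp hq
  | smul r p _ hp =>
    rw [smul_comm]
    exact Submodule.smul_mem _ _ hp
end

section
/- Define g_{1,j} = x_1⋯x_{j-1}·z_1⋯z_j·(x_{j+1}y_j - x_jy_{j+1}) for 1 ≤ j ≤ n-1 in k[x_i,y_i,z_i]. Then for 1 ≤ j ≤ n-2, the identity X_{[1,j-1]∪{j+1}} Z_{[1,j]} g_{j+1} - z_{j+1}x_{j+2} g_{1,j} = g_{1,j+1} holds, where g_{j+1} = z_{j+1}(x_{j+2}y_j - x_jy_{j+2}) (with g_1 = z_1(x_2y_1 - x_1y_2)). Consequently each g_{1,j} lies in the ideal (g_1,...,g_n). -/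
open MvPolynomial

noncomputable def xz (k : Type*) [Field k] (n : ℕ) (hn : 0 < n) (i : ℕ) :
    MvPolynomial (Fin 3 × Fin n) k := X (0, ⟨(i - 1) % n, Nat.mod_lt _ hn⟩)

noncomputable def yz (k : Type*) [Field k] (n : ℕ) (hn : 0 < n) (i : ℕ) :
    MvPolynomial (Fin 3 × Fin n) k := X (1, ⟨(i - 1) % n, Nat.mod_lt _ hn⟩)

noncomputable def zz (k : Type*) [Field k] (n : ℕ) (hn : 0 < n) (i : ℕ) :
    MvPolynomial (Fin 3 × Fin n) k := X (2, ⟨(i - 1) % n, Nat.mod_lt _ hn⟩)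

noncomputable def Δz (k : Type*) [Field k] (n : ℕ) (hn : 0 < n) (a b : ℕ) :
    MvPolynomial (Fin 3 × Fin n) k :=
  xz k n hn a * yz k n hn b - xz k n hn b * yz k n hn a

noncomputable def gg (k : Type*) [Field k] (n : ℕ) (hn : 0 < n) (i : ℕ) :
    MvPolynomial (Fin 3 × Fin n) k :=
  if i = 1 then zz k n hn 1 * Δz k n hn 2 1
  else if i = n then zz k n hn n * Δz k n hn n (n - 1)
  else zz k n hn i * Δz k n hn (i + 1) (i - 1)

noncomputable def gOne (k : Type*) [Field k] (n : ℕ) (hn : 0 < n) (j : ℕ) :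
    MvPolynomial (Fin 3 × Fin n) k :=
  (∏ t ∈ Finset.Icc 1 (j - 1), xz k n hn t) * (∏ t ∈ Finset.Icc 1 j, zz k n hn t) *
    Δz k n hn (j + 1) j

lemma key_s12 (k : Type*) [Field k] (n : ℕ) (hn : 4 ≤ n) (hn' : 0 < n) (j : ℕ)
    (hj1 : 1 ≤ j) (hj2 : j ≤ n - 2) :
    (∏ t ∈ Finset.Icc 1 (j - 1) ∪ {j + 1}, xz k n hn' t) *
        (∏ t ∈ Finset.Icc 1 j, zz k n hn' t) * gg k n hn' (j + 1) -
        zz k n hn' (j + 1) * xz k n hn' (j + 2) * gOne k n hn' j =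
        gOne k n hn' (j + 1) := by
  obtain ⟨m, rfl⟩ : ∃ m, j = m + 1 := ⟨j - 1, by omega⟩
  have hdisj : Disjoint (Finset.Icc 1 (m + 1 - 1)) ({m + 1 + 1} : Finset ℕ) := by
    simp [Finset.disjoint_singleton_right]
  rw [Finset.prod_union hdisj]
  have h1 : gg k n hn' (m + 1 + 1) = zz k n hn' (m + 2) * Δz k n hn' (m + 3) (m + 1) := by
    rw [gg, if_neg (by omega), if_neg (by omega)]
    norm_num
  rw [h1, gOne, gOne]
  simp only [Nat.add_sub_cancel, Finset.prod_singleton,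
    Finset.prod_Icc_succ_top (Nat.le_add_left 1 m),
    Finset.prod_Icc_succ_top (Nat.le_add_left 1 (m+1))]
  simp only [Δz]
  ring

/-- For `1 ≤ j ≤ n-2`,
`X_{[1,j-1]∪{j+1}} Z_{[1,j]} g_{j+1} - z_{j+1}x_{j+2} g_{1,j} = g_{1,j+1}`;
consequently each `g_{1,j}` (`1 ≤ j ≤ n-1`) lies in the ideal `(g_1,…,g_n)`. -/
theorem stmt12 (k : Type*) [Field k] (n : ℕ) (hn : 4 ≤ n) :
    (∀ j : ℕ, 1 ≤ j → j ≤ n - 2 →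
      (∏ t ∈ Finset.Icc 1 (j - 1) ∪ {j + 1}, xz k n (by omega) t) *
        (∏ t ∈ Finset.Icc 1 j, zz k n (by omega) t) * gg k n (by omega) (j + 1) -
        zz k n (by omega) (j + 1) * xz k n (by omega) (j + 2) * gOne k n (by omega) j =
        gOne k n (by omega) (j + 1)) ∧
    (∀ j : ℕ, 1 ≤ j → j ≤ n - 1 →
      gOne k n (by omega) j ∈ Ideal.span (gg k n (by omega) '' Set.Icc 1 n)) := by
  have hn' : 0 < n := by omega
  constructor
  · exact fun j hj1 hj2 => key_s12 k n hn hn' j hj1 hj2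
  · intro j hj1 hj2
    induction j with
    | zero => omega
    | succ m ih =>
      rcases Nat.eq_or_lt_of_le hj1 with h1 | h1
      · -- m + 1 = 1, i.e. m = 0 : gOne 1 = gg 1
        have hm : m = 0 := by omega
        subst hm
        have : gOne k n hn' 1 = gg k n hn' 1 := by
          rw [gOne, gg, if_pos rfl]
          simp [Δz]
        rw [this]
        exact Ideal.subset_span ⟨1, ⟨le_refl 1, by omega⟩, rfl⟩
      · have hm1 : 1 ≤ m := by omega
        have hm2 : m ≤ n - 2 := by omega
        have hkey := key_s12 k n hn hn' m hm1 hm2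
        rw [← hkey]
        apply sub_mem
        · exact Ideal.mul_mem_left _ _ (Ideal.subset_span ⟨m + 1, ⟨by omega, by omega⟩, rfl⟩)
        · exact Ideal.mul_mem_left _ _ (ih hm1 (by omega))
end

section
/- Let g_{k,n} = Y_{[k+1,n]} Z_{[k,n]} Δ_{k,k-1} (k = 2,...,n). For integers 1 ≤ j < i ≤ n, the telescoping identity Y_{[j+1,n]\{i}} Z_{[j+1,n]} Δ_{i,j} = Σ_{k=j+1}^{i} Y_{[j,k-2]} Z_{[j+1,k-1]} g_{k,n} holds in k[x_i, y_i, z_i]. -/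
open MvPolynomial

/-- `g_{k,n} = Y_{[k+1,n]} Z_{[k,n]} Δ_{k,k-1}`. -/
noncomputable def gN (k : Type*) [Field k] (n : ℕ) (hn : 0 < n) (j : ℕ) :
    MvPolynomial (Fin 3 × Fin n) k :=
  (∏ t ∈ Finset.Icc (j + 1) n, yz k n hn t) * (∏ t ∈ Finset.Icc j n, zz k n hn t) *
    Δz k n hn j (j - 1)

lemma prod_Icc_erase' {M : Type*} [CommMonoid M] (f : ℕ → M) (a b i : ℕ)
    (h0 : 1 ≤ i) (h1 : a ≤ i) (h2 : i ≤ b) :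
    ∏ t ∈ (Finset.Icc a b).erase i, f t =
      (∏ t ∈ Finset.Icc a (i - 1), f t) * ∏ t ∈ Finset.Icc (i + 1) b, f t := by
  rw [← Finset.prod_union (Finset.disjoint_left.2 fun t ht ht' => by simp only [Finset.mem_Icc] at ht ht'; omega)]
  apply Finset.prod_congr _ (fun _ _ => rfl)
  ext t
  simp only [Finset.mem_erase, Finset.mem_Icc, Finset.mem_union]
  omega

lemma prod_Icc_split' {M : Type*} [CommMonoid M] (f : ℕ → M) (a b c : ℕ)
    (h1 : a ≤ c + 1) (h2 : c ≤ b) :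
    ∏ t ∈ Finset.Icc a b, f t =
      (∏ t ∈ Finset.Icc a c, f t) * ∏ t ∈ Finset.Icc (c + 1) b, f t := by
  rw [← Finset.prod_union (Finset.disjoint_left.2 fun t ht ht' => by simp only [Finset.mem_Icc] at ht ht'; omega)]
  apply Finset.prod_congr _ (fun _ _ => rfl)
  ext t; simp only [Finset.mem_Icc, Finset.mem_union]; omega

lemma prod_Icc_pull_top' {M : Type*} [CommMonoid M] (f : ℕ → M) (a b : ℕ)
    (h1 : a ≤ b) (h2 : 1 ≤ b) :
    ∏ t ∈ Finset.Icc a b, f t = (∏ t ∈ Finset.Icc a (b - 1), f t) * f b := by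
  have hb : b - 1 + 1 = b := by omega
  rw [prod_Icc_split' f a b (b - 1) (by omega) (by omega), hb, Finset.Icc_self,
    Finset.prod_singleton]

lemma prod_Icc_pull_bot' {M : Type*} [CommMonoid M] (f : ℕ → M) (a b : ℕ)
    (h : a ≤ b) :
    ∏ t ∈ Finset.Icc a b, f t = f a * ∏ t ∈ Finset.Icc (a + 1) b, f t := by
  rw [prod_Icc_split' f a b a (by omega) h, Finset.Icc_self, Finset.prod_singleton]

lemma stmt14_key (k : Type*) [Field k] (n : ℕ) (h : 0 < n) (hn : 4 ≤ n)
    (i j : ℕ) (hj : 1 ≤ j) (hji : j < i) (hin : i ≤ n) :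
    (∏ t ∈ (Finset.Icc (j + 1) n).erase i, yz k n h t) *
      (∏ t ∈ Finset.Icc (j + 1) n, zz k n h t) * Δz k n h i j =
    ∑ m ∈ Finset.Icc (j + 1) i,
      (∏ t ∈ Finset.Icc j (m - 2), yz k n h t) *
        (∏ t ∈ Finset.Icc (j + 1) (m - 1), zz k n h t) *
        gN k n h m := by
  revert hin
  induction i, hji using Nat.le_induction with
  | base =>
    intro hin
    rw [Finset.Icc_self, Finset.sum_singleton]
    have e1 : j + 1 - 2 = j - 1 := by omega
    have e2 : j + 1 - 1 = j := by omega
    rw [e1, e2, Finset.Icc_eq_empty (by omega : ¬ j ≤ j - 1),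
      Finset.Icc_eq_empty (by omega : ¬ j + 1 ≤ j), Finset.prod_empty, Finset.prod_empty,
      prod_Icc_erase' _ (j + 1) n (j + 1) (by omega) le_rfl hin, e2,
      Finset.Icc_eq_empty (by omega : ¬ j + 1 ≤ j), Finset.prod_empty, gN, e2]
    ring
  | succ i hi ih =>
    intro hin
    have ihi := ih (by omega)
    rw [Finset.sum_Icc_succ_top (by omega), ← ihi]
    have e1 : i + 1 - 2 = i - 1 := by omega
    have e2 : i + 1 - 1 = i := by omega
    rw [e1, e2, gN, e2,
      prod_Icc_erase' _ (j + 1) n (i + 1) (by omega) (by omega) (by omega), e2,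
      prod_Icc_erase' _ (j + 1) n i (by omega) (by omega) (by omega),
      prod_Icc_pull_top' _ (j + 1) i (by omega) (by omega),
      prod_Icc_pull_bot' (yz k n h) (i + 1) n (by omega),
      prod_Icc_pull_bot' (yz k n h) j (i - 1) (by omega),
      prod_Icc_split' (zz k n h) (j + 1) n i (by omega) (by omega)]
    simp only [Δz]
    ring

/-- For `1 ≤ j < i ≤ n`, the telescoping identity
`Y_{[j+1,n]\{i}} Z_{[j+1,n]} Δ_{i,j} = Σ_{k=j+1}^{i} Y_{[j,k-2]} Z_{[j+1,k-1]} g_{k,n}`. -/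
theorem stmt14 (k : Type*) [Field k] (n : ℕ) (hn : 4 ≤ n)
    (i j : ℕ) (hj : 1 ≤ j) (hji : j < i) (hin : i ≤ n) :
    (∏ t ∈ (Finset.Icc (j + 1) n).erase i, yz k n (by omega) t) *
      (∏ t ∈ Finset.Icc (j + 1) n, zz k n (by omega) t) * Δz k n (by omega) i j =
    ∑ m ∈ Finset.Icc (j + 1) i,
      (∏ t ∈ Finset.Icc j (m - 2), yz k n (by omega) t) *
        (∏ t ∈ Finset.Icc (j + 1) (m - 1), zz k n (by omega) t) *
        gN k n (by omega) m :=
  stmt14_key k n (by omega) hn i j hj hji hin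
end
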